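/- Let u(x,t) = P(t) ω(σ(x,t)) with P(t) = (k+1) t^{−(k+1)} and σ(x,t) = −(k+1)x^{n+4}/((n+4)⁴ t^{k+1}), where ω is four times differentiable, n, k > 0 and α = n/(n+4). Then u satisfies x^n u_t − t^k u_{xxxx} = 0 on {x>0, t>0} if and only if ω satisfies σ³ω'''' + (3 + (3+α)/4 + (2+2α)/4 + (1+3α)/4) σ² ω''' + (1 + s₁ + s₂) σ ω'' + (((3+α)/4)((2+2α)/4)((1+3α)/4) − σ) ω' − ω = 0 at all points σ = σ(x,t), where s₁ = (3+α)/4 + (2+2α)/4 + (1+3α)/4 and s₂ = ((3+α)/4)((2+2α)/4) + ((3+α)/4)((1+3α)/4) + ((2+2α)/4)((1+3α)/4). -/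
import Mathlib


/-- The self-similar variable σ(x,t) = −(k+1)x^{n+4}/((n+4)⁴ t^{k+1}). -/
noncomputable def sigma4 (n k x t : ℝ) : ℝ :=
  -((k + 1) / ((n + 4) ^ 4 * t ^ (k + 1 : ℝ))) * x ^ (n + 4 : ℝ)

/-- The self-similar ansatz u(x,t) = (k+1) t^{−(k+1)} ω(σ(x,t)). -/
noncomputable def uAnsatz4 (n k : ℝ) (ω : ℝ → ℝ) (x t : ℝ) : ℝ :=
  (k + 1) * t ^ (-(k + 1) : ℝ) * ω (sigma4 n k x t)

lemma HasDerivAt.congr_deriv' {f : ℝ → ℝ} {f' g' x : ℝ} (h : HasDerivAt f f' x)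
    (h' : f' = g') : HasDerivAt f g' x := h' ▸ h

/-- Derivative of `y ↦ a * φ (c * y ^ p) * y ^ q` at a positive point. -/
lemma term_hasDerivAt {φ : ℝ → ℝ} (hφ : Differentiable ℝ φ) (a c p q : ℝ) {y : ℝ}
    (hy : 0 < y) :
    HasDerivAt (fun z => a * φ (c * z ^ p) * z ^ q)
      (a * (c * p) * deriv φ (c * y ^ p) * y ^ (p - 1 + q)
        + a * q * φ (c * y ^ p) * y ^ (q - 1)) y := by
  have hrp : HasDerivAt (fun z : ℝ => c * z ^ p) (c * (p * y ^ (p - 1))) y :=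
    (Real.hasDerivAt_rpow_const (Or.inl hy.ne')).const_mul c
  have hcomp : HasDerivAt (fun z : ℝ => φ (c * z ^ p))
      (deriv φ (c * y ^ p) * (c * (p * y ^ (p - 1)))) y :=
    (hφ.differentiableAt.hasDerivAt).comp y hrp
  have hq : HasDerivAt (fun z : ℝ => z ^ q) (q * y ^ (q - 1)) y :=
    Real.hasDerivAt_rpow_const (Or.inl hy.ne')
  exact ((hcomp.const_mul a).mul hq).congr_deriv' (by rw [Real.rpow_add hy]; ring)

noncomputable def G1f (ω : ℝ → ℝ) (C c m : ℝ) : ℝ → ℝ :=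
  fun y => C * (c * m) * deriv ω (c * y ^ m) * y ^ (m - 1)

noncomputable def G2f (ω : ℝ → ℝ) (C c m : ℝ) : ℝ → ℝ :=
  fun y => C * (c * m) * (c * m) * deriv (deriv ω) (c * y ^ m) * y ^ (m - 1 + (m - 1))
    + C * (c * m) * (m - 1) * deriv ω (c * y ^ m) * y ^ (m - 1 - 1)

noncomputable def G3f (ω : ℝ → ℝ) (C c m : ℝ) : ℝ → ℝ :=
  fun y =>
    (C * (c * m) * (c * m) * (c * m) * deriv (deriv (deriv ω)) (c * y ^ m)
        * y ^ (m - 1 + (m - 1 + (m - 1)))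
      + C * (c * m) * (c * m) * (m - 1 + (m - 1)) * deriv (deriv ω) (c * y ^ m)
        * y ^ (m - 1 + (m - 1) - 1))
    + (C * (c * m) * (m - 1) * (c * m) * deriv (deriv ω) (c * y ^ m)
        * y ^ (m - 1 + (m - 1 - 1))
      + C * (c * m) * (m - 1) * (m - 1 - 1) * deriv ω (c * y ^ m)
        * y ^ (m - 1 - 1 - 1))

lemma iteratedDeriv_four (f : ℝ → ℝ) :
    iteratedDeriv 4 f = deriv (deriv (deriv (deriv f))) := by
  rw [show (4:ℕ) = 3+1 from rfl, iteratedDeriv_succ, show (3:ℕ) = 2+1 from rfl,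
    iteratedDeriv_succ, show (2:ℕ) = 1+1 from rfl, iteratedDeriv_succ, iteratedDeriv_one]

lemma iteratedDeriv_three (f : ℝ → ℝ) :
    iteratedDeriv 3 f = deriv (deriv (deriv f)) := by
  rw [show (3:ℕ) = 2+1 from rfl, iteratedDeriv_succ, show (2:ℕ) = 1+1 from rfl,
    iteratedDeriv_succ, iteratedDeriv_one]

lemma iteratedDeriv_two' (f : ℝ → ℝ) :
    iteratedDeriv 2 f = deriv (deriv f) := by
  rw [show (2:ℕ) = 1+1 from rfl, iteratedDeriv_succ, iteratedDeriv_one]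

/-- Fourth derivative of `y ↦ C * ω (c * y ^ m)` at a positive point. -/
lemma iter4 {ω : ℝ → ℝ} (hω : Differentiable ℝ ω) (hω1 : Differentiable ℝ (deriv ω))
    (hω2 : Differentiable ℝ (deriv (deriv ω)))
    (hω3 : Differentiable ℝ (deriv (deriv (deriv ω)))) (C c m : ℝ) {x : ℝ} (hx : 0 < x) :
    iteratedDeriv 4 (fun y => C * ω (c * y ^ m)) x
      = C / x ^ 4 * ((c * m) ^ 4 * (x ^ m) ^ 4 * deriv (deriv (deriv (deriv ω))) (c * x ^ m)
          + 6 * c ^ 3 * m ^ 3 * (m - 1) * (x ^ m) ^ 3 * deriv (deriv (deriv ω)) (c * x ^ m)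
          + c ^ 2 * m ^ 2 * (m - 1) * (7 * m - 11) * (x ^ m) ^ 2 * deriv (deriv ω) (c * x ^ m)
          + c * m * (m - 1) * (m - 2) * (m - 3) * x ^ m * deriv ω (c * x ^ m)) := by
  set g : ℝ → ℝ := fun y => C * ω (c * y ^ m) with hg
  have h1 : ∀ y ∈ Set.Ioi (0:ℝ), HasDerivAt g (G1f ω C c m y) y := by
    intro y hy
    have hrp : HasDerivAt (fun z : ℝ => c * z ^ m) (c * (m * y ^ (m - 1))) y :=
      (Real.hasDerivAt_rpow_const (Or.inl (ne_of_gt hy))).const_mul c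
    exact (((hω.differentiableAt.hasDerivAt).comp y hrp).const_mul C).congr_deriv'
      (by simp only [G1f]; ring)
  have h2 : ∀ y ∈ Set.Ioi (0:ℝ), HasDerivAt (G1f ω C c m) (G2f ω C c m y) y :=
    fun y hy => term_hasDerivAt hω1 (C * (c * m)) c m (m - 1) hy
  have h3 : ∀ y ∈ Set.Ioi (0:ℝ), HasDerivAt (G2f ω C c m) (G3f ω C c m y) y :=
    fun y hy =>
      (term_hasDerivAt hω2 (C * (c * m) * (c * m)) c m (m - 1 + (m - 1)) hy).add
        (term_hasDerivAt hω1 (C * (c * m) * (m - 1)) c m (m - 1 - 1) hy)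
  have E1 : Set.EqOn (deriv g) (G1f ω C c m) (Set.Ioi 0) := fun y hy => (h1 y hy).deriv
  have E2 : Set.EqOn (deriv (deriv g)) (G2f ω C c m) (Set.Ioi 0) := by
    intro y hy
    rw [Filter.EventuallyEq.deriv_eq (E1.eventuallyEq_of_mem (isOpen_Ioi.mem_nhds hy))]
    exact (h2 y hy).deriv
  have E3 : Set.EqOn (deriv (deriv (deriv g))) (G3f ω C c m) (Set.Ioi 0) := by
    intro y hy
    rw [Filter.EventuallyEq.deriv_eq (E2.eventuallyEq_of_mem (isOpen_Ioi.mem_nhds hy))]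
    exact (h3 y hy).deriv
  have h4 : HasDerivAt (G3f ω C c m)
      ((C * (c * m) * (c * m) * (c * m) * (c * m)
          * deriv (deriv (deriv (deriv ω))) (c * x ^ m)
          * x ^ (m - 1 + (m - 1 + (m - 1 + (m - 1))))
        + C * (c * m) * (c * m) * (c * m) * (m - 1 + (m - 1 + (m - 1)))
          * deriv (deriv (deriv ω)) (c * x ^ m) * x ^ (m - 1 + (m - 1 + (m - 1)) - 1)
        + (C * (c * m) * (c * m) * (m - 1 + (m - 1)) * (c * m)
          * deriv (deriv (deriv ω)) (c * x ^ m) * x ^ (m - 1 + (m - 1 + (m - 1) - 1))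
        + C * (c * m) * (c * m) * (m - 1 + (m - 1)) * (m - 1 + (m - 1) - 1)
          * deriv (deriv ω) (c * x ^ m) * x ^ (m - 1 + (m - 1) - 1 - 1)))
      + (C * (c * m) * (m - 1) * (c * m) * (c * m)
          * deriv (deriv (deriv ω)) (c * x ^ m) * x ^ (m - 1 + (m - 1 + (m - 1 - 1)))
        + C * (c * m) * (m - 1) * (c * m) * (m - 1 + (m - 1 - 1))
          * deriv (deriv ω) (c * x ^ m) * x ^ (m - 1 + (m - 1 - 1) - 1)
        + (C * (c * m) * (m - 1) * (m - 1 - 1) * (c * m)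
          * deriv (deriv ω) (c * x ^ m) * x ^ (m - 1 + (m - 1 - 1 - 1))
        + C * (c * m) * (m - 1) * (m - 1 - 1) * (m - 1 - 1 - 1)
          * deriv ω (c * x ^ m) * x ^ (m - 1 - 1 - 1 - 1)))) x := by
    have t1 := term_hasDerivAt hω3 (C * (c * m) * (c * m) * (c * m)) c m
      (m - 1 + (m - 1 + (m - 1))) hx
    have t2 := term_hasDerivAt hω2 (C * (c * m) * (c * m) * (m - 1 + (m - 1))) c m
      (m - 1 + (m - 1) - 1) hx
    have t3 := term_hasDerivAt hω2 (C * (c * m) * (m - 1) * (c * m)) c m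
      (m - 1 + (m - 1 - 1)) hx
    have t4 := term_hasDerivAt hω1 (C * (c * m) * (m - 1) * (m - 1 - 1)) c m
      (m - 1 - 1 - 1) hx
    exact ((t1.add t2).add (t3.add t4)).congr_deriv' (by ring)
  have key : iteratedDeriv 4 g x = deriv (G3f ω C c m) x := by
    rw [iteratedDeriv_four]
    exact Filter.EventuallyEq.deriv_eq (E3.eventuallyEq_of_mem (isOpen_Ioi.mem_nhds hx))
  rw [key, h4.deriv]
  simp only [Real.rpow_add hx, Real.rpow_sub hx, Real.rpow_one]
  field_simp
  ring

set_option maxHeartbeats 4000000 in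
theorem fourth_order_reduction (n k α : ℝ) (hn : 0 < n) (hk : 0 < k)
    (hα : α = n / (n + 4)) (ω : ℝ → ℝ)
    (hω : Differentiable ℝ ω) (hω1 : Differentiable ℝ (deriv ω))
    (hω2 : Differentiable ℝ (deriv (deriv ω)))
    (hω3 : Differentiable ℝ (deriv (deriv (deriv ω)))) :
    (∀ x t : ℝ, 0 < x → 0 < t →
        x ^ (n : ℝ) * deriv (fun s => uAnsatz4 n k ω x s) t
          - t ^ (k : ℝ) * iteratedDeriv 4 (fun s => uAnsatz4 n k ω s t) x = 0)
    ↔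
    (∀ x t : ℝ, 0 < x → 0 < t →
        (sigma4 n k x t) ^ 3 * iteratedDeriv 4 ω (sigma4 n k x t)
          + (3 + (3 + α) / 4 + (2 + 2 * α) / 4 + (1 + 3 * α) / 4)
              * (sigma4 n k x t) ^ 2 * iteratedDeriv 3 ω (sigma4 n k x t)
          + (1 + ((3 + α) / 4 + (2 + 2 * α) / 4 + (1 + 3 * α) / 4)
              + ((3 + α) / 4 * ((2 + 2 * α) / 4) + (3 + α) / 4 * ((1 + 3 * α) / 4)
                + (2 + 2 * α) / 4 * ((1 + 3 * α) / 4)))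
              * (sigma4 n k x t) * iteratedDeriv 2 ω (sigma4 n k x t)
          + ((3 + α) / 4 * ((2 + 2 * α) / 4) * ((1 + 3 * α) / 4) - sigma4 n k x t)
              * deriv ω (sigma4 n k x t)
          - ω (sigma4 n k x t) = 0) := by
  subst hα
  have key : ∀ x t : ℝ, 0 < x → 0 < t →
      x ^ (n : ℝ) * deriv (fun s => uAnsatz4 n k ω x s) t
        - t ^ (k : ℝ) * iteratedDeriv 4 (fun s => uAnsatz4 n k ω s t) x
      = (-((k + 1) * (n + 4) ^ 4 * sigma4 n k x t) / (t * x ^ 4)) *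
        ((sigma4 n k x t) ^ 3 * iteratedDeriv 4 ω (sigma4 n k x t)
          + (3 + (3 + n / (n + 4)) / 4 + (2 + 2 * (n / (n + 4))) / 4
              + (1 + 3 * (n / (n + 4))) / 4)
              * (sigma4 n k x t) ^ 2 * iteratedDeriv 3 ω (sigma4 n k x t)
          + (1 + ((3 + n / (n + 4)) / 4 + (2 + 2 * (n / (n + 4))) / 4
              + (1 + 3 * (n / (n + 4))) / 4)
              + ((3 + n / (n + 4)) / 4 * ((2 + 2 * (n / (n + 4))) / 4)
                + (3 + n / (n + 4)) / 4 * ((1 + 3 * (n / (n + 4))) / 4)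
                + (2 + 2 * (n / (n + 4))) / 4 * ((1 + 3 * (n / (n + 4))) / 4)))
              * (sigma4 n k x t) * iteratedDeriv 2 ω (sigma4 n k x t)
          + ((3 + n / (n + 4)) / 4 * ((2 + 2 * (n / (n + 4))) / 4)
              * ((1 + 3 * (n / (n + 4))) / 4) - sigma4 n k x t)
              * deriv ω (sigma4 n k x t)
          - ω (sigma4 n k x t)) := by
    intro x t hx ht
    -- the time derivative
    have hσt : -((k + 1) * x ^ (n + 4 : ℝ) / (n + 4) ^ 4) * t ^ (-(k + 1) : ℝ)
        = sigma4 n k x t := by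
      have hT : t ^ (k + 1 : ℝ) ≠ 0 := (Real.rpow_pos_of_pos ht _).ne'
      have hn4 : (n + 4 : ℝ) ≠ 0 := by linarith
      simp only [sigma4]
      rw [Real.rpow_neg ht.le]
      field_simp
    have heqt : (fun s => uAnsatz4 n k ω x s) =ᶠ[nhds t]
        (fun s => (k + 1) * ω (-((k + 1) * x ^ (n + 4 : ℝ) / (n + 4) ^ 4)
          * s ^ (-(k + 1) : ℝ)) * s ^ (-(k + 1) : ℝ)) := by
      filter_upwards [Ioi_mem_nhds ht] with s hs
      have hs' : (0:ℝ) < s := hs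
      have harg : sigma4 n k x s
          = -((k + 1) * x ^ (n + 4 : ℝ) / (n + 4) ^ 4) * s ^ (-(k + 1) : ℝ) := by
        have hT : s ^ (k + 1 : ℝ) ≠ 0 := (Real.rpow_pos_of_pos hs' _).ne'
        have hn4 : (n + 4 : ℝ) ≠ 0 := by linarith
        simp only [sigma4]
        rw [Real.rpow_neg hs'.le]
        field_simp
      simp only [uAnsatz4, harg]
      ring
    have htd : deriv (fun s => uAnsatz4 n k ω x s) t
        = (k + 1) * (-((k + 1) * x ^ (n + 4 : ℝ) / (n + 4) ^ 4) * -(k + 1))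
            * deriv ω (sigma4 n k x t) * t ^ (-(k + 1) - 1 + -(k + 1) : ℝ)
          + (k + 1) * -(k + 1) * ω (sigma4 n k x t) * t ^ (-(k + 1) - 1 : ℝ) := by
      have h0 := term_hasDerivAt hω (k + 1) (-((k + 1) * x ^ (n + 4 : ℝ) / (n + 4) ^ 4))
        (-(k + 1)) (-(k + 1)) ht
      rw [hσt] at h0
      exact (h0.congr_of_eventuallyEq heqt).deriv
    -- the fourth space derivative
    have hσx : -((k + 1) / ((n + 4) ^ 4 * t ^ (k + 1 : ℝ))) * x ^ (n + 4 : ℝ)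
        = sigma4 n k x t := rfl
    have hxd : iteratedDeriv 4 (fun s => uAnsatz4 n k ω s t) x
        = ((k + 1) * t ^ (-(k + 1) : ℝ)) / x ^ 4 *
            (((-((k + 1) / ((n + 4) ^ 4 * t ^ (k + 1 : ℝ)))) * (n + 4)) ^ 4
                * (x ^ (n + 4 : ℝ)) ^ 4 * deriv (deriv (deriv (deriv ω))) (sigma4 n k x t)
              + 6 * (-((k + 1) / ((n + 4) ^ 4 * t ^ (k + 1 : ℝ)))) ^ 3 * (n + 4) ^ 3
                * (n + 4 - 1) * (x ^ (n + 4 : ℝ)) ^ 3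
                * deriv (deriv (deriv ω)) (sigma4 n k x t)
              + (-((k + 1) / ((n + 4) ^ 4 * t ^ (k + 1 : ℝ)))) ^ 2 * (n + 4) ^ 2
                * (n + 4 - 1) * (7 * (n + 4) - 11) * (x ^ (n + 4 : ℝ)) ^ 2
                * deriv (deriv ω) (sigma4 n k x t)
              + (-((k + 1) / ((n + 4) ^ 4 * t ^ (k + 1 : ℝ)))) * (n + 4) * (n + 4 - 1)
                * (n + 4 - 2) * (n + 4 - 3) * x ^ (n + 4 : ℝ)
                * deriv ω (sigma4 n k x t)) := by
      have := iter4 hω hω1 hω2 hω3 ((k + 1) * t ^ (-(k + 1) : ℝ))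
        (-((k + 1) / ((n + 4) ^ 4 * t ^ (k + 1 : ℝ)))) (n + 4) hx
      rw [hσx] at this
      exact this
    rw [htd, hxd, iteratedDeriv_four, iteratedDeriv_three, iteratedDeriv_two']
    have hn4 : (n + 4 : ℝ) ≠ 0 := by linarith
    have hT : t ^ (k + 1 : ℝ) ≠ 0 := (Real.rpow_pos_of_pos ht _).ne'
    have hx4 : x ^ (4 : ℝ) = x ^ (4 : ℕ) := by
      rw [show (4:ℝ) = ((4:ℕ):ℝ) by norm_num, Real.rpow_natCast]
    have hc1 : (3 + n / (n + 4)) / 4 = 1 - 1 / (n + 4) := by field_simp; ring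
    have hc2 : (2 + 2 * (n / (n + 4))) / 4 = 1 - 2 / (n + 4) := by field_simp; ring
    have hc3 : (1 + 3 * (n / (n + 4))) / 4 = 1 - 3 / (n + 4) := by field_simp; ring
    have hxn : x ^ (n : ℝ) = x ^ (n + 4 : ℝ) / x ^ (4 : ℕ) := by
      rw [eq_div_iff (pow_ne_zero 4 hx.ne'), ← hx4, ← Real.rpow_add hx]
    have htkr : t ^ (k : ℝ) = t ^ (k + 1 : ℝ) / t := by
      rw [eq_div_iff ht.ne']
      nth_rewrite 2 [← Real.rpow_one t]
      rw [← Real.rpow_add ht]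
    have he1 : t ^ (-(k + 1) : ℝ) = (t ^ (k + 1 : ℝ))⁻¹ := Real.rpow_neg ht.le _
    have he2 : t ^ (-(k + 1) - 1 + -(k + 1) : ℝ)
        = (t ^ (k + 1 : ℝ) * t ^ (k + 1 : ℝ) * t)⁻¹ := by
      rw [show (-(k + 1) - 1 + -(k + 1) : ℝ) = -((k + 1) + (k + 1) + 1) by ring,
        Real.rpow_neg ht.le, Real.rpow_add ht ((k + 1) + (k + 1)) 1,
        Real.rpow_add ht (k + 1) (k + 1), Real.rpow_one]
    have he3 : t ^ (-(k + 1) - 1 : ℝ) = (t ^ (k + 1 : ℝ) * t)⁻¹ := by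
      rw [show (-(k + 1) - 1 : ℝ) = -((k + 1) + 1) by ring,
        Real.rpow_neg ht.le, Real.rpow_add ht (k + 1) 1, Real.rpow_one]
    set w0 := ω (sigma4 n k x t)
    set w1 := deriv ω (sigma4 n k x t)
    set w2 := deriv (deriv ω) (sigma4 n k x t)
    set w3 := deriv (deriv (deriv ω)) (sigma4 n k x t)
    set w4 := deriv (deriv (deriv (deriv ω))) (sigma4 n k x t)
    simp only [sigma4]
    rw [hc1, hc2, hc3, hxn, htkr, he1, he2, he3]
    set M : ℝ := n + 4 with hMdef
    set XM : ℝ := x ^ (M : ℝ) with hXM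
    set T : ℝ := t ^ (k + 1 : ℝ) with hTdef
    clear_value w0 w1 w2 w3 w4 XM T M
    field_simp
    ring
  constructor
  · intro h x t hx ht
    have h2 := h x t hx ht
    rw [key x t hx ht] at h2
    have hσneg : sigma4 n k x t < 0 := by
      have h1 : (0:ℝ) < (k + 1) / ((n + 4) ^ 4 * t ^ (k + 1 : ℝ)) := by positivity
      have h2 : (0:ℝ) < x ^ (n + 4 : ℝ) := Real.rpow_pos_of_pos hx _
      simp only [sigma4]
      nlinarith
    have hfac : (-((k + 1) * (n + 4) ^ 4 * sigma4 n k x t) / (t * x ^ 4)) ≠ 0 := by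
      have h3 : (0:ℝ) < -((k + 1) * (n + 4) ^ 4 * sigma4 n k x t) := by
        have hp : (0:ℝ) < (k + 1) * (n + 4) ^ 4 := by positivity
        nlinarith [mul_pos hp (neg_pos.2 hσneg)]
      have h4 : (0:ℝ) < t * x ^ 4 := by positivity
      positivity
    rcases mul_eq_zero.1 h2 with h5 | h5
    · exact absurd h5 hfac
    · exact h5
  · intro h x t hx ht
    rw [key x t hx ht, h x t hx ht, mul_zero]
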